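/- arXiv:2201.02292 — 2 statements merged into one kernel-verified Lean document; each statement's English description precedes it below -/
import Mathlib

section
/- For each (x,w) ∈ 𝒳×𝒲, the density of the intervened covariate vector satisfies lim_{δ→0} (f_{X_δ,W}(x,w) − f_{X,W}(x,w))/δ = −∂/∂x[κ(x)·f_{X,W}(x,w)], where f_{X_δ,W}(x,w) := J(x^δ;δ)·f_{X,W}(x^δ,w) is the joint density of (𝒢(X;δ),W). (Theorem 1(i).) -/
open Filter Set Topology

/-!
Write `x^δ = Ginv x δ`, the solution of `𝒢(x^δ;δ) = x`. The implicit function theorem, together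
with strict monotonicity of `𝒢(·;δ)` to identify `x^δ` with the implicit solution, shows that
`δ ↦ x^δ` is differentiable at `0` with derivative `-κ(x)`; differentiating `𝒢(x^δ;δ) = x` in `x`
gives `J(x^δ;δ) = 1 / ∂ₓ𝒢(x^δ;δ)`. Since `𝒢(·;0) = id`, `∂ₓ∂ₓ𝒢(x;0) = 0`, and by symmetry of
second derivatives `∂_δ∂ₓ𝒢(x;0) = ∂ₓ∂_δ𝒢(x;0) = κ'(x)`. So `δ ↦ J(x^δ;δ)` has derivative
`-κ'(x)` at `0`, and the product rule gives the derivative `-(κ' f + κ ∂ₓf)` of the intervened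
density at `δ = 0`.
-/

section Slices

variable {E : Type*} [NormedAddCommGroup E] [NormedSpace ℝ E] {f : ℝ × ℝ → E}
  {f' : ℝ × ℝ →L[ℝ] E} {a b : ℝ}

theorem HasFDerivAt.hasDerivAt_fst_slice (hf : HasFDerivAt f f' (a, b)) :
    HasDerivAt (fun y => f (y, b)) (f' (1, 0)) a :=
  hf.comp_hasDerivAt a ((hasDerivAt_id a).prodMk (hasDerivAt_const a b))

theorem HasFDerivAt.hasDerivAt_snd_slice (hf : HasFDerivAt f f' (a, b)) :
    HasDerivAt (fun t => f (a, t)) (f' (0, 1)) b :=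
  hf.comp_hasDerivAt b ((hasDerivAt_const b a).prodMk (hasDerivAt_id b))

end Slices

theorem HasFDerivAt.apply_one_zero_eq_one {F : ℝ × ℝ → ℝ} {L : ℝ × ℝ →L[ℝ] ℝ} {a b : ℝ}
    (hF : HasFDerivAt F L (a, b)) (hid : ∀ᶠ y in 𝓝 a, F (y, b) = y) : L (1, 0) = 1 :=
  (hF.hasDerivAt_fst_slice.congr_of_eventuallyEq (hid.mono fun _ hy => hy.symm)).unique
    (hasDerivAt_id a)

theorem HasDerivAt.mul_eq_one_of_leftInverse {g φ : ℝ → ℝ} {a j x : ℝ}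
    (hg : HasDerivAt g a (φ x)) (hφ : HasDerivAt φ j x) (hgφ : ∀ᶠ y in 𝓝 x, g (φ y) = y) :
    a * j = 1 :=
  ((hg.comp x hφ).congr_of_eventuallyEq (hgφ.mono fun _ hy => hy.symm)).unique (hasDerivAt_id x)

theorem ContDiffAt.fderiv_fderiv_apply_comm {E F : Type*} [NormedAddCommGroup E]
    [NormedSpace ℝ E] [NormedAddCommGroup F] [NormedSpace ℝ F] {f : E → F} {x : E}
    (hf : ContDiffAt ℝ 2 f x) (v w : E) :
    fderiv ℝ (fun y => fderiv ℝ f y v) x w = fderiv ℝ (fun y => fderiv ℝ f y w) x v := by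
  have hd : DifferentiableAt ℝ (fderiv ℝ f) x :=
    (hf.fderiv_right (m := 1) (by norm_num)).differentiableAt one_ne_zero
  rw [fderiv_clm_apply hd (differentiableAt_const v),
    fderiv_clm_apply hd (differentiableAt_const w)]
  simpa using hf.isSymmSndFDerivAt (by simp) w v

theorem HasStrictFDerivAt.hasDerivAt_of_injOn {G : ℝ → ℝ → ℝ} {L : ℝ × ℝ →L[ℝ] ℝ} {x t : ℝ}
    (hG : HasStrictFDerivAt (↿G) L (x, t)) (hL : L (1, 0) ≠ 0) {U I : Set ℝ} (hU : U ∈ 𝓝 x)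
    (hI : I ∈ 𝓝 t) (hinj : ∀ s ∈ I, InjOn (G · s) U) {φ : ℝ → ℝ} (hφU : ∀ s ∈ I, φ s ∈ U)
    (hφ : ∀ s ∈ I, G (φ s) s = G x t) :
    HasDerivAt φ (-L (0, 1) / L (1, 0)) t := by
  set σ := ContinuousLinearEquiv.prodComm ℝ ℝ ℝ
  have hΨ : HasStrictFDerivAt (fun q : ℝ × ℝ => G q.2 q.1) (L ∘L (σ : ℝ × ℝ →L[ℝ] ℝ × ℝ))
      (t, x) :=
    hG.comp (t, x) σ.hasStrictFDerivAt
  have hM : ∀ s, ((L ∘L (σ : ℝ × ℝ →L[ℝ] ℝ × ℝ)) ∘L .inr ℝ ℝ ℝ) s = s * L (1, 0) := by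
    intro s
    simpa [σ] using L.map_smul s ((1 : ℝ), (0 : ℝ))
  have hL' : ((L ∘L (σ : ℝ × ℝ →L[ℝ] ℝ × ℝ)) ∘L .inr ℝ ℝ ℝ).IsInvertible := by
    refine .of_inverse (g := (L (1, 0))⁻¹ • .id ℝ ℝ) ?_ ?_ <;> ext <;> simp [hM, hL]
  set ψ := hΨ.implicitFunctionOfProdDomain hL'
  have hψφ : ψ =ᶠ[𝓝 t] φ := by
    filter_upwards [hΨ.tendsto_implicitFunctionOfProdDomain hL' hU, hI,
      hΨ.eventually_apply_implicitFunctionOfProdDomain hL'] with s hψU hs hψ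
    exact hinj s hs hψU (hφU s hs) (hψ.trans (hφ s hs).symm)
  refine ((hΨ.hasStrictFDerivAt_implicitFunctionOfProdDomain hL').hasFDerivAt.hasDerivAt
    |>.congr_of_eventuallyEq hψφ.symm).congr_deriv ?_
  have hinv : ((L ∘L (σ : ℝ × ℝ →L[ℝ] ℝ × ℝ)) ∘L .inr ℝ ℝ ℝ).inverse (L (0, 1)) =
      L (0, 1) / L (1, 0) :=
    hL'.inverse_apply_eq.2 (by rw [hM, div_mul_cancel₀ _ hL])
  simp [σ, hinv, neg_div]

theorem ContDiffAt.exists_hasDerivAt_fderiv_apply_one_zero_comp {F : ℝ × ℝ → ℝ} {κ h : ℝ → ℝ}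
    {x h' : ℝ} (hF : ContDiffAt ℝ 2 F (x, 0)) (hid : ∀ᶠ y in 𝓝 x, F (y, 0) = y)
    (hκ : ∀ᶠ y in 𝓝 x, HasDerivAt (fun t => F (y, t)) (κ y) 0)
    (hh : HasDerivAt h h' 0) (hh0 : h 0 = x) :
    ∃ κ', HasDerivAt κ κ' x ∧ HasDerivAt (fun t => fderiv ℝ F (h t, t) (1, 0)) κ' 0 := by
  have hline : Tendsto (fun y : ℝ => (y, (0 : ℝ))) (𝓝 x) (𝓝 (x, 0)) :=
    tendsto_id.prodMk_nhds tendsto_const_nhds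
  have hDF : ∀ᶠ y in 𝓝 x, HasFDerivAt F (fderiv ℝ F (y, 0)) (y, 0) :=
    hline.eventually <| (hF.eventually (by simp)).mono fun p hp =>
      (hp.differentiableAt two_ne_zero).hasFDerivAt
  have hD₁ : ∀ᶠ y in 𝓝 x, fderiv ℝ F (y, 0) (1, 0) = 1 := by
    filter_upwards [hDF, eventually_eventually_nhds.2 hid] with y hy hidy
    exact hy.apply_one_zero_eq_one hidy
  have hD₂ : ∀ᶠ y in 𝓝 x, fderiv ℝ F (y, 0) (0, 1) = κ y := by
    filter_upwards [hDF, hκ] with y hy hκy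
    exact hy.hasDerivAt_snd_slice.unique hκy
  have hdiff : DifferentiableAt ℝ (fderiv ℝ F) (x, 0) :=
    (hF.fderiv_right (m := 1) (by norm_num)).differentiableAt one_ne_zero
  have hDv : ∀ v : ℝ × ℝ, HasFDerivAt (fun p => fderiv ℝ F p v)
      (fderiv ℝ (fun p => fderiv ℝ F p v) (x, 0)) (x, 0) := fun v =>
    (hdiff.clm_apply (differentiableAt_const v)).hasFDerivAt
  refine ⟨fderiv ℝ (fun p => fderiv ℝ F p (0, 1)) (x, 0) (1, 0),
    (hDv _).hasDerivAt_fst_slice.congr_of_eventuallyEq (hD₂.mono fun _ hy => hy.symm), ?_⟩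
  have h11 : fderiv ℝ (fun p => fderiv ℝ F p (1, 0)) (x, 0) (1, 0) = 0 :=
    (hDv _).hasDerivAt_fst_slice.unique ((hasDerivAt_const x 1).congr_of_eventuallyEq hD₁)
  have hcurve : HasDerivAt (fun t => (h t, t)) (h', 1) 0 := hh.prodMk (hasDerivAt_id 0)
  refine ((hDv (1, 0)).comp_hasDerivAt_of_eq 0 hcurve (by rw [hh0])).congr_deriv ?_
  have hsplit : ((h', 1) : ℝ × ℝ) = h' • ((1 : ℝ), (0 : ℝ)) + ((0 : ℝ), (1 : ℝ)) := by simp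
  rw [hsplit, map_add, map_smul, h11, hF.fderiv_fderiv_apply_comm, smul_zero, zero_add]

theorem stmt_0_general
    {dw : ℕ}
    (ε : ℝ) (hε : 0 < ε)
    -- 𝒳 is an open interval of ℝ
    (Xs : Set ℝ) (hXs_open : IsOpen Xs)
    -- 𝒲 ⊆ ℝ^{d_w}
    (Ws : Set (Fin dw → ℝ))
    (G Ginv J : ℝ → ℝ → ℝ) (κ : ℝ → ℝ)
    (f : ℝ → (Fin dw → ℝ) → ℝ)
    -- 𝒢 is twice continuously differentiable on 𝒳 × 𝒩_ε
    (hG_smooth : ContDiffOn ℝ 2 (fun p : ℝ × ℝ => G p.1 p.2) (Xs ×ˢ Ioo (-ε) ε))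
    -- 𝒢(·;δ) is strictly increasing on 𝒳 for each δ ∈ 𝒩_ε
    (hG_mono : ∀ δ ∈ Ioo (-ε) ε, StrictMonoOn (fun x => G x δ) Xs)
    -- 𝒢(x;0) = x
    (hG_id : ∀ x ∈ Xs, G x 0 = x)
    -- x ↦ x^δ = Ginv x δ is the inverse of x ↦ 𝒢(x;δ)
    (hGinv_mem : ∀ δ ∈ Ioo (-ε) ε, ∀ x ∈ Xs, Ginv x δ ∈ Xs)
    (hGinv : ∀ δ ∈ Ioo (-ε) ε, ∀ x ∈ Xs, G (Ginv x δ) δ = x)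
    -- J(x^δ;δ) = ∂x^δ/∂x is the Jacobian of the inverse transform
    (hJ : ∀ δ ∈ Ioo (-ε) ε, ∀ x ∈ Xs, HasDerivAt (fun y => Ginv y δ) (J x δ) x)
    -- κ(x) = ∂𝒢(x;δ)/∂δ |_{δ=0}
    (hκ : ∀ x ∈ Xs, HasDerivAt (fun δ => G x δ) (κ x) 0)
    -- f_{X,W} is a joint probability density, continuously differentiable in x
    (hf_smooth : ∀ w ∈ Ws, ContDiffOn ℝ 1 (fun x => f x w) Xs) :
    ∀ x ∈ Xs, ∀ w ∈ Ws,
      ∃ d : ℝ,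
        HasDerivAt (fun y => κ y * f y w) d x ∧
        Tendsto (fun δ => (J x δ * f (Ginv x δ) w - f x w) / δ)
          (𝓝[≠] (0:ℝ)) (𝓝 (-d)) := by
  intro x hx w hw
  have h0 : (0 : ℝ) ∈ Ioo (-ε) ε := ⟨by linarith, hε⟩
  have hxX : Xs ∈ 𝓝 x := hXs_open.mem_nhds hx
  have hG : ∀ p ∈ Xs ×ˢ Ioo (-ε) ε, ContDiffAt ℝ 2 (↿G) p := fun p hp =>
    hG_smooth.contDiffAt ((hXs_open.prod isOpen_Ioo).mem_nhds hp)
  have hDG : ∀ p ∈ Xs ×ˢ Ioo (-ε) ε, HasFDerivAt (↿G) (fderiv ℝ (↿G) p) p := fun p hp =>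
    ((hG p hp).differentiableAt two_ne_zero).hasFDerivAt
  have hid : ∀ᶠ y in 𝓝 x, G y 0 = y := eventually_of_mem hxX hG_id
  have hD₁ : fderiv ℝ (↿G) (x, 0) (1, 0) = 1 := (hDG _ ⟨hx, h0⟩).apply_one_zero_eq_one hid
  have hD₂ : fderiv ℝ (↿G) (x, 0) (0, 1) = κ x :=
    (hDG _ ⟨hx, h0⟩).hasDerivAt_snd_slice.unique (hκ x hx)
  have hxδ : HasDerivAt (Ginv x ·) (-κ x) 0 := by
    simpa [hD₁, hD₂] using ((hG _ ⟨hx, h0⟩).hasStrictFDerivAt two_ne_zero).hasDerivAt_of_injOn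
      (by simp [hD₁]) hxX (isOpen_Ioo.mem_nhds h0)
      (fun δ hδ => (hG_mono δ hδ).injOn) (fun δ hδ => hGinv_mem δ hδ x hx)
      (fun δ hδ => by rw [hGinv δ hδ x hx, hG_id x hx])
  have hx0 : Ginv x 0 = x := by
    simpa [hG_id _ (hGinv_mem 0 h0 x hx)] using hGinv 0 h0 x hx
  have hJq : ∀ δ ∈ Ioo (-ε) ε, J x δ = (fderiv ℝ (↿G) (Ginv x δ, δ) (1, 0))⁻¹ := fun δ hδ =>
    eq_inv_of_mul_eq_one_right <| HasDerivAt.mul_eq_one_of_leftInverse (φ := (Ginv · δ))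
      (hDG _ ⟨hGinv_mem δ hδ x hx, hδ⟩).hasDerivAt_fst_slice (hJ δ hδ x hx)
        (eventually_of_mem hxX (hGinv δ hδ))
  obtain ⟨κ', hκ', hq⟩ := (hG _ ⟨hx, h0⟩).exists_hasDerivAt_fderiv_apply_one_zero_comp hid
    (eventually_of_mem hxX hκ) hxδ hx0
  have hf : HasDerivAt (f · w) (deriv (f · w) x) x :=
    (((hf_smooth w hw).differentiableOn one_ne_zero).differentiableAt hxX).hasDerivAt
  refine ⟨κ' * f x w + κ x * deriv (f · w) x, hκ'.mul hf, ?_⟩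
  have hg : HasDerivAt (fun δ => (fderiv ℝ (↿G) (Ginv x δ, δ) (1, 0))⁻¹ * f (Ginv x δ) w)
      (-(κ' * f x w + κ x * deriv (f · w) x)) 0 := by
    refine ((hq.inv (by simp [hx0, hD₁])).mul (hf.comp_of_eq 0 hxδ hx0.symm)).congr_deriv ?_
    simp only [Function.comp_apply, Pi.inv_apply, hx0, hD₁]
    ring
  refine (hasDerivAt_iff_tendsto_slope_zero.1 hg).congr' ?_
  filter_upwards [nhdsWithin_le_nhds (isOpen_Ioo.mem_nhds h0)] with δ hδ
  simp [hJq δ hδ, hx0, hD₁, div_eq_inv_mul]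

/-- **Theorem 1(i)**: pointwise limit of the difference quotient of the intervened
joint density `f_{X_δ,W}(x,w) = J(x^δ;δ)·f_{X,W}(x^δ,w)`:
`lim_{δ→0} (f_{X_δ,W}(x,w) − f_{X,W}(x,w))/δ = −∂/∂x [κ(x)·f_{X,W}(x,w)]`. -/
theorem stmt_0
    {dw : ℕ}
    (ε : ℝ) (hε : 0 < ε)
    -- 𝒳 is an open interval of ℝ
    (Xs : Set ℝ) (hXs_open : IsOpen Xs) (hXs_conn : Xs.OrdConnected)
    -- 𝒲 ⊆ ℝ^{d_w}
    (Ws : Set (Fin dw → ℝ))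
    (G Ginv J : ℝ → ℝ → ℝ) (κ : ℝ → ℝ)
    (f : ℝ → (Fin dw → ℝ) → ℝ)
    -- 𝒢 is twice continuously differentiable on 𝒳 × 𝒩_ε
    (hG_smooth : ContDiffOn ℝ 2 (fun p : ℝ × ℝ => G p.1 p.2) (Xs ×ˢ Ioo (-ε) ε))
    -- 𝒢(·;δ) is strictly increasing on 𝒳 for each δ ∈ 𝒩_ε
    (hG_mono : ∀ δ ∈ Ioo (-ε) ε, StrictMonoOn (fun x => G x δ) Xs)
    -- 𝒢(x;0) = x
    (hG_id : ∀ x ∈ Xs, G x 0 = x)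
    -- x ↦ x^δ = Ginv x δ is the inverse of x ↦ 𝒢(x;δ)
    (hGinv_mem : ∀ δ ∈ Ioo (-ε) ε, ∀ x ∈ Xs, Ginv x δ ∈ Xs)
    (hGinv : ∀ δ ∈ Ioo (-ε) ε, ∀ x ∈ Xs, G (Ginv x δ) δ = x)
    -- J(x^δ;δ) = ∂x^δ/∂x is the Jacobian of the inverse transform
    (hJ : ∀ δ ∈ Ioo (-ε) ε, ∀ x ∈ Xs, HasDerivAt (fun y => Ginv y δ) (J x δ) x)
    -- κ(x) = ∂𝒢(x;δ)/∂δ |_{δ=0}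
    (hκ : ∀ x ∈ Xs, HasDerivAt (fun δ => G x δ) (κ x) 0)
    -- f_{X,W} is a joint probability density, continuously differentiable in x
    (hf_nonneg : ∀ x w, 0 ≤ f x w)
    (hf_total : (∫ w in Ws, ∫ x in Xs, f x w) = 1)
    (hf_smooth : ∀ w ∈ Ws, ContDiffOn ℝ 1 (fun x => f x w) Xs) :
    ∀ x ∈ Xs, ∀ w ∈ Ws,
      ∃ d : ℝ,
        HasDerivAt (fun y => κ y * f y w) d x ∧
        Tendsto (fun δ => (J x δ * f (Ginv x δ) w - f x w) / δ)
          (𝓝[≠] (0:ℝ)) (𝓝 (-d)) :=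
  stmt_0_general ε hε Xs hXs_open Ws G Ginv J κ f hG_smooth hG_mono hG_id hGinv_mem hGinv hJ hκ
    hf_smooth
end

section
/- Consider the linear model Y = λ + Xγ + U with X and U independent, and suppose X − E[X] is symmetrically distributed about zero. Then the scale effect computed at μ = E[X], Π_{τ,S}(X,γ) := ṡ(0)·γ·E[f_U(Q_τ[Y]−λ−γX)·(X−E[X])]/f_Y(Q_τ[Y]), depends on neither E[X] nor the sign of γ: for every c∈ℝ, Π_{τ,S}(X+c,γ) = Π_{τ,S}(X,γ) (where the quantities for X+c are computed with outcome Y=λ+γ(X+c)+U, quantile Q_τ of that outcome, and centering at E[X]+c), and Π_{τ,S}(X,−γ) = Π_{τ,S}(X,γ). (Proposition, Section 2.3.) -/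
/-!
Shifting `X` by `c` shifts the outcome by `γc`, so its quantile and its (continuous, hence
unique) density are translated by `γc` and the integrand of the numerator is unchanged.
For the sign of `γ`, write `Z = X - E[X]`: the outcome `λ - γX + U = λ - γE[X] - γZ + U` has,
by symmetry of `Z` and independence of `Z` and `U`, the law of `λ + γX + U - 2γE[X]`. Again
quantile and density are translated, while the numerator changes sign under `Z ↦ -Z`, which
cancels the sign change of `γ`.
-/

open MeasureTheory ProbabilityTheory Filter Set Topology

/-- The τ-quantile `Q_τ[Z] = inf {q : P(Z ≤ q) ≥ τ}` of a real random variable `Z`. -/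
noncomputable def rvQuantile {Ω : Type*} [MeasurableSpace Ω] (μ : Measure Ω)
    (τ : ℝ) (Z : Ω → ℝ) : ℝ :=
  sInf {q : ℝ | τ ≤ (μ {ω | Z ω ≤ q}).toReal}

section Quantile

variable {Ω : Type*} [MeasurableSpace Ω] {μ : Measure Ω} {τ : ℝ} {Z : Ω → ℝ}

lemma toReal_measure_le_eq_cdf_map [IsProbabilityMeasure μ] (hZ : AEMeasurable Z μ) (q : ℝ) :
    (μ {ω | Z ω ≤ q}).toReal = cdf (μ.map Z) q := by
  have := Measure.isProbabilityMeasure_map (μ := μ) hZ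
  rw [cdf_eq_real, measureReal_def, Measure.map_apply_of_aemeasurable hZ measurableSet_Iic]
  rfl

lemma nonempty_setOf_le_cdf (ν : Measure ℝ) (hτ : τ < 1) : {q | τ ≤ cdf ν q}.Nonempty :=
  ((tendsto_cdf_atTop ν).eventually_const_le hτ).exists

lemma bddBelow_setOf_le_cdf (ν : Measure ℝ) (hτ : 0 < τ) : BddBelow {q | τ ≤ cdf ν q} := by
  obtain ⟨q₀, hq₀⟩ := ((tendsto_cdf_atBot ν).eventually_lt_const hτ).exists
  exact ⟨q₀, fun q hq => le_of_not_gt fun hlt =>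
    (hq₀.trans_le hq).not_ge (monotone_cdf ν hlt.le)⟩

lemma rvQuantile_orderIso_comp [IsProbabilityMeasure μ] (hZ : AEMeasurable Z μ)
    (hτ : τ ∈ Ioo 0 1) (e : ℝ ≃o ℝ) :
    rvQuantile μ τ (fun ω => e (Z ω)) = e (rvQuantile μ τ Z) := by
  have hcdf := toReal_measure_le_eq_cdf_map hZ
  have hset : {q | τ ≤ (μ {ω | e (Z ω) ≤ q}).toReal} =
      e '' {q | τ ≤ (μ {ω | Z ω ≤ q}).toReal} := by
    ext q
    simp only [e.image_eq_preimage_symm, mem_preimage, mem_ofPred, ← e.le_symm_apply]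
  unfold rvQuantile
  rw [hset, e.map_csInf']
  · simpa only [hcdf] using nonempty_setOf_le_cdf (μ.map Z) hτ.2
  · simpa only [hcdf] using bddBelow_setOf_le_cdf (μ.map Z) hτ.1

lemma rvQuantile_add_const [IsProbabilityMeasure μ] (hZ : AEMeasurable Z μ)
    (hτ : τ ∈ Ioo 0 1) (c : ℝ) :
    rvQuantile μ τ (fun ω => Z ω + c) = rvQuantile μ τ Z + c :=
  rvQuantile_orderIso_comp hZ hτ (OrderIso.addRight c)

lemma ProbabilityTheory.IdentDistrib.rvQuantile_eq {Ω' : Type*} [MeasurableSpace Ω']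
    {ν : Measure Ω'} {Z' : Ω' → ℝ} (h : IdentDistrib Z Z' μ ν) (τ : ℝ) :
    rvQuantile μ τ Z = rvQuantile ν τ Z' := by
  unfold rvQuantile
  congr 1
  ext q
  exact iff_of_eq (congrArg (fun t => τ ≤ ENNReal.toReal t) (h.measure_mem_eq measurableSet_Iic))

end Quantile

lemma eq_of_withDensity_ofReal_eq {α : Type*} [TopologicalSpace α] [MeasurableSpace α]
    [OpensMeasurableSpace α] {ν : Measure α} [ν.IsOpenPosMeasure] [SigmaFinite ν]
    {f g : α → ℝ} (hf₀ : ∀ x, 0 ≤ f x) (hg₀ : ∀ x, 0 ≤ g x) (hf : Continuous f)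
    (hg : Continuous g)
    (h : ν.withDensity (fun x => ENNReal.ofReal (f x)) =
      ν.withDensity (fun x => ENNReal.ofReal (g x))) : f = g := by
  have hae := (withDensity_eq_iff_of_sigmaFinite
    (ENNReal.measurable_ofReal.comp hf.measurable).aemeasurable
    (ENNReal.measurable_ofReal.comp hg.measurable).aemeasurable).mp h
  refine (hf.ae_eq_iff_eq ν hg).mp ?_
  filter_upwards [hae] with x hx
  exact (ENNReal.ofReal_eq_ofReal_iff (hf₀ x) (hg₀ x)).mp hx

lemma map_add_right_withDensity {G : Type*} [MeasurableSpace G] [AddGroup G] [MeasurableAdd G]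
    (ν : Measure G) [ν.IsAddRightInvariant] (f : G → ENNReal) (c : G) :
    (ν.withDensity f).map (· + c) = ν.withDensity (fun y => f (y - c)) := by
  ext s hs
  rw [Measure.map_apply (measurable_add_const c) hs,
    withDensity_apply _ (hs.preimage (measurable_add_const c)), withDensity_apply _ hs]
  simpa only [add_sub_cancel_right] using
    (measurePreserving_add_right ν c).setLIntegral_comp_preimage_emb
      (MeasurableEquiv.addRight c).measurableEmbedding (fun y => f (y - c)) s

lemma ProbabilityTheory.IdentDistrib.density_eq_sub {Ω : Type*} [MeasurableSpace Ω]
    {μ : Measure Ω} {W W' : Ω → ℝ} (hW : Measurable W) {a : ℝ}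
    (h : IdentDistrib W' (fun ω => W ω + a) μ μ)
    {f g : ℝ → ℝ} (hf₀ : ∀ y, 0 ≤ f y) (hg₀ : ∀ y, 0 ≤ g y) (hf : Continuous f)
    (hg : Continuous g)
    (hfW : μ.map W = volume.withDensity (fun y => ENNReal.ofReal (f y)))
    (hgW' : μ.map W' = volume.withDensity (fun y => ENNReal.ofReal (g y))) :
    g = fun y => f (y - a) := by
  refine eq_of_withDensity_ofReal_eq (ν := volume) hg₀ (fun y => hf₀ _) hg
    (hf.comp (continuous_sub_right a)) ?_
  calc volume.withDensity (fun y => ENNReal.ofReal (g y))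
      = μ.map (fun ω => W ω + a) := hgW'.symm.trans h.map_eq
    _ = (μ.map W).map (· + a) := (Measure.map_map (measurable_add_const a) hW).symm
    _ = _ := by rw [hfW, map_add_right_withDensity]

section ScaleEffect

variable {Ω : Type*} [MeasurableSpace Ω] {μ : Measure Ω} [IsProbabilityMeasure μ]
  {X U : Ω → ℝ} {fU fY : ℝ → ℝ} {τ lam γ : ℝ}

/-- `Π_{τ,S}(X, γ)` for the outcome `λ + γX + U` with density `fY`, centred at `E[X]`. -/
noncomputable def scaleEffect (μ : Measure Ω) (τ s0 lam γ : ℝ) (fU fY : ℝ → ℝ)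
    (X U : Ω → ℝ) : ℝ :=
  s0 * γ *
      (∫ ω, fU (rvQuantile μ τ (fun ω' => lam + γ * X ω' + U ω') - lam - γ * X ω) *
        (X ω - ∫ ω', X ω' ∂μ) ∂μ) /
    fY (rvQuantile μ τ (fun ω' => lam + γ * X ω' + U ω'))

theorem scaleEffect_add_const (hX : Measurable X) (hU : Measurable U) (hX_int : Integrable X μ)
    (hτ : τ ∈ Ioo 0 1) (hfY₀ : ∀ y, 0 ≤ fY y) (hfY : Continuous fY)
    (hfY_density : μ.map (fun ω => lam + γ * X ω + U ω) =
      volume.withDensity (fun y => ENNReal.ofReal (fY y)))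
    (c : ℝ) {fYc : ℝ → ℝ} (hfYc₀ : ∀ y, 0 ≤ fYc y) (hfYc : Continuous fYc)
    (hfYc_density : μ.map (fun ω => lam + γ * (X ω + c) + U ω) =
      volume.withDensity (fun y => ENNReal.ofReal (fYc y))) (s0 : ℝ) :
    scaleEffect μ τ s0 lam γ fU fYc (fun ω => X ω + c) U =
      scaleEffect μ τ s0 lam γ fU fY X U := by
  set Y := fun ω => lam + γ * X ω + U ω
  have hY : Measurable Y := by fun_prop
  have hYc : (fun ω => lam + γ * (X ω + c) + U ω) = fun ω => Y ω + γ * c := by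
    funext ω; ring
  have hQ : rvQuantile μ τ (fun ω => lam + γ * (X ω + c) + U ω) = rvQuantile μ τ Y + γ * c := by
    rw [hYc]; exact rvQuantile_add_const hY.aemeasurable hτ (γ * c)
  have hfYc_eq : fYc = fun y => fY (y - γ * c) :=
    IdentDistrib.density_eq_sub hY (hYc ▸ .refl (by fun_prop)) hfY₀ hfYc₀ hfY hfYc
      hfY_density hfYc_density
  have hmean : ∫ ω, (X ω + c) ∂μ = ∫ ω, X ω ∂μ + c := by
    simp [integral_add hX_int (integrable_const c)]
  simp only [scaleEffect, hQ, hfYc_eq, hmean, add_sub_cancel_right]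
  congr 3 with ω
  rw [add_sub_add_right_eq_sub, show rvQuantile μ τ Y + γ * c - lam - γ * (X ω + c) =
    rvQuantile μ τ Y - lam - γ * X ω by ring]

theorem scaleEffect_neg (hX : Measurable X) (hU : Measurable U) (hindep : IndepFun X U μ)
    (hfU : Continuous fU)
    (hX_symm : μ.map (fun ω => X ω - ∫ ω', X ω' ∂μ) = μ.map (fun ω => -(X ω - ∫ ω', X ω' ∂μ)))
    (hτ : τ ∈ Ioo 0 1) (hfY₀ : ∀ y, 0 ≤ fY y) (hfY : Continuous fY)
    (hfY_density : μ.map (fun ω => lam + γ * X ω + U ω) =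
      volume.withDensity (fun y => ENNReal.ofReal (fY y)))
    {fYneg : ℝ → ℝ} (hfYneg₀ : ∀ y, 0 ≤ fYneg y) (hfYneg : Continuous fYneg)
    (hfYneg_density : μ.map (fun ω => lam + -γ * X ω + U ω) =
      volume.withDensity (fun y => ENNReal.ofReal (fYneg y))) (s0 : ℝ) :
    scaleEffect μ τ s0 lam (-γ) fU fYneg X U = scaleEffect μ τ s0 lam γ fU fY X U := by
  set m := ∫ ω, X ω ∂μ
  set Y := fun ω => lam + γ * X ω + U ω
  set Z := fun ω => X ω - m
  have hY : Measurable Y := by fun_prop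
  have hZ : IdentDistrib Z (fun ω => -Z ω) μ μ := ⟨by fun_prop, by fun_prop, hX_symm⟩
  have hZU : IdentDistrib (fun ω => (Z ω, U ω)) (fun ω => (-Z ω, U ω)) μ μ :=
    hZ.prodMk (.refl hU.aemeasurable) (hindep.comp (measurable_sub_const m) measurable_id)
      (hindep.comp (measurable_sub_const m).neg measurable_id)
  -- both outcomes are `λ - γm - γz + u` evaluated at `(Z, U)` and at `(-Z, U)`
  have hYneg :
      IdentDistrib (fun ω => lam + -γ * X ω + U ω) (fun ω => Y ω + -(2 * γ * m)) μ μ := by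
    convert hZU.comp (u := fun p : ℝ × ℝ => lam - γ * m - γ * p.1 + p.2) (by fun_prop)
      using 1 <;> funext ω <;> simp only [Function.comp_apply, Y, Z] <;> ring
  have hQ : rvQuantile μ τ (fun ω => lam + -γ * X ω + U ω) = rvQuantile μ τ Y + -(2 * γ * m) :=
    (hYneg.rvQuantile_eq τ).trans (rvQuantile_add_const hY.aemeasurable hτ _)
  have hfYneg_eq : fYneg = fun y => fY (y - -(2 * γ * m)) :=
    hYneg.density_eq_sub hY hfY₀ hfYneg₀ hfY hfYneg hfY_density hfYneg_density
  have hnum : ∫ ω, fU (rvQuantile μ τ Y + -(2 * γ * m) - lam - -γ * X ω) * (X ω - m) ∂μ =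
      -∫ ω, fU (rvQuantile μ τ Y - lam - γ * X ω) * (X ω - m) ∂μ := by
    set b := rvQuantile μ τ Y - lam - γ * m
    calc ∫ ω, fU (rvQuantile μ τ Y + -(2 * γ * m) - lam - -γ * X ω) * (X ω - m) ∂μ
        = ∫ ω, fU (b + γ * Z ω) * Z ω ∂μ := by
          congr with ω; simp only [b, Z]; ring_nf
      _ = ∫ ω, fU (b + γ * -Z ω) * -Z ω ∂μ :=
          (hZ.comp (u := fun z => fU (b + γ * z) * z) (by fun_prop)).integral_eq
      _ = ∫ ω, -(fU (rvQuantile μ τ Y - lam - γ * X ω) * (X ω - m)) ∂μ := by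
          congr with ω; simp only [b, Z]; ring_nf
      _ = _ := integral_neg _
  simp only [scaleEffect]
  rw [hQ, hfYneg_eq, hnum]
  simp only [add_sub_cancel_right]
  ring

end ScaleEffect

theorem stmt_7_general
    {Ω : Type*} [MeasurableSpace Ω] (μ : Measure Ω) [IsProbabilityMeasure μ]
    (X U : Ω → ℝ) (hX_meas : Measurable X) (hU_meas : Measurable U)
    (hX_int : Integrable X μ)
    (hindep : IndepFun X U μ)
    -- U has a continuous bounded density f_U
    (fU : ℝ → ℝ) (hfU_cont : Continuous fU)
    -- X − E[X] is symmetrically distributed about zero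
    (hX_symm :
      Measure.map (fun ω => X ω - ∫ ω', X ω' ∂μ) μ =
        Measure.map (fun ω => -(X ω - ∫ ω', X ω' ∂μ)) μ)
    (lam γ s0 : ℝ)
    (τ : ℝ) (hτ : τ ∈ Ioo (0:ℝ) 1)
    -- continuous densities of the outcomes Y = λ+γX+U, Y_c = λ+γ(X+c)+U, Y₋ = λ−γX+U
    (fY : ℝ → ℝ) (hfY_nonneg : ∀ y, 0 ≤ fY y) (hfY_cont : Continuous fY)
    (hfY_density :
      Measure.map (fun ω => lam + γ * X ω + U ω) μ =
        volume.withDensity (fun y => ENNReal.ofReal (fY y)))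
    (fYc : ℝ → ℝ → ℝ) (hfYc_nonneg : ∀ c y, 0 ≤ fYc c y)
    (hfYc_cont : ∀ c, Continuous (fYc c))
    (hfYc_density : ∀ c : ℝ,
      Measure.map (fun ω => lam + γ * (X ω + c) + U ω) μ =
        volume.withDensity (fun y => ENNReal.ofReal (fYc c y)))
    (fYneg : ℝ → ℝ) (hfYneg_nonneg : ∀ y, 0 ≤ fYneg y) (hfYneg_cont : Continuous fYneg)
    (hfYneg_density :
      Measure.map (fun ω => lam + -γ * X ω + U ω) μ =
        volume.withDensity (fun y => ENNReal.ofReal (fYneg y))) :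
    -- invariance to a location change of the covariate
    (∀ c : ℝ,
      s0 * γ *
          (∫ ω, fU (rvQuantile μ τ (fun ω' => lam + γ * (X ω' + c) + U ω') -
              lam - γ * (X ω + c)) * ((X ω + c) - ∫ ω', (X ω' + c) ∂μ) ∂μ) /
          fYc c (rvQuantile μ τ (fun ω' => lam + γ * (X ω' + c) + U ω')) =
        s0 * γ *
          (∫ ω, fU (rvQuantile μ τ (fun ω' => lam + γ * X ω' + U ω') -
              lam - γ * X ω) * (X ω - ∫ ω', X ω' ∂μ) ∂μ) /
          fY (rvQuantile μ τ (fun ω' => lam + γ * X ω' + U ω'))) ∧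
    -- invariance to the sign of γ
    (s0 * -γ *
        (∫ ω, fU (rvQuantile μ τ (fun ω' => lam + -γ * X ω' + U ω') -
            lam - -γ * X ω) * (X ω - ∫ ω', X ω' ∂μ) ∂μ) /
        fYneg (rvQuantile μ τ (fun ω' => lam + -γ * X ω' + U ω')) =
      s0 * γ *
        (∫ ω, fU (rvQuantile μ τ (fun ω' => lam + γ * X ω' + U ω') -
            lam - γ * X ω) * (X ω - ∫ ω', X ω' ∂μ) ∂μ) /
        fY (rvQuantile μ τ (fun ω' => lam + γ * X ω' + U ω'))) :=
  ⟨fun c => scaleEffect_add_const hX_meas hU_meas hX_int hτ hfY_nonneg hfY_cont hfY_density c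
      (hfYc_nonneg c) (hfYc_cont c) (hfYc_density c) s0,
    scaleEffect_neg hX_meas hU_meas hindep hfU_cont hX_symm hτ hfY_nonneg hfY_cont hfY_density
      hfYneg_nonneg hfYneg_cont hfYneg_density s0⟩

/-- **Proposition (Section 2.3)**: in the linear model `Y = λ + Xγ + U` with `X ⟂ U` and
`X − E[X]` symmetric about zero, the scale effect computed at `μ = E[X]`,
`Π_{τ,S}(X,γ) = ṡ(0)·γ·E[f_U(Q_τ[Y]−λ−γX)(X−E[X])]/f_Y(Q_τ[Y])`,
depends neither on `E[X]` (is invariant to replacing `X` by `X+c`, with all objects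
recomputed for the shifted covariate) nor on the sign of `γ`. -/
theorem stmt_7
    {Ω : Type*} [MeasurableSpace Ω] (μ : Measure Ω) [IsProbabilityMeasure μ]
    (X U : Ω → ℝ) (hX_meas : Measurable X) (hU_meas : Measurable U)
    (hX_int : Integrable X μ)
    (hindep : IndepFun X U μ)
    -- U has a continuous bounded density f_U
    (fU : ℝ → ℝ) (hfU_nonneg : ∀ x, 0 ≤ fU x) (hfU_cont : Continuous fU)
    (hfU_bdd : ∃ C, ∀ x, fU x ≤ C)
    (hfU_density :
      Measure.map U μ = volume.withDensity (fun x => ENNReal.ofReal (fU x)))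
    -- X − E[X] is symmetrically distributed about zero
    (hX_symm :
      Measure.map (fun ω => X ω - ∫ ω', X ω' ∂μ) μ =
        Measure.map (fun ω => -(X ω - ∫ ω', X ω' ∂μ)) μ)
    (lam γ s0 : ℝ) (hγ : γ ≠ 0)
    (τ : ℝ) (hτ : τ ∈ Ioo (0:ℝ) 1)
    -- continuous densities of the outcomes Y = λ+γX+U, Y_c = λ+γ(X+c)+U, Y₋ = λ−γX+U
    (fY : ℝ → ℝ) (hfY_nonneg : ∀ y, 0 ≤ fY y) (hfY_cont : Continuous fY)
    (hfY_density :
      Measure.map (fun ω => lam + γ * X ω + U ω) μ =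
        volume.withDensity (fun y => ENNReal.ofReal (fY y)))
    (fYc : ℝ → ℝ → ℝ) (hfYc_nonneg : ∀ c y, 0 ≤ fYc c y)
    (hfYc_cont : ∀ c, Continuous (fYc c))
    (hfYc_density : ∀ c : ℝ,
      Measure.map (fun ω => lam + γ * (X ω + c) + U ω) μ =
        volume.withDensity (fun y => ENNReal.ofReal (fYc c y)))
    (fYneg : ℝ → ℝ) (hfYneg_nonneg : ∀ y, 0 ≤ fYneg y) (hfYneg_cont : Continuous fYneg)
    (hfYneg_density :
      Measure.map (fun ω => lam + -γ * X ω + U ω) μ =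
        volume.withDensity (fun y => ENNReal.ofReal (fYneg y)))
    -- positivity of the densities at the respective quantiles
    (hfY_pos : 0 < fY (rvQuantile μ τ (fun ω => lam + γ * X ω + U ω)))
    (hfYc_pos : ∀ c : ℝ,
      0 < fYc c (rvQuantile μ τ (fun ω => lam + γ * (X ω + c) + U ω)))
    (hfYneg_pos : 0 < fYneg (rvQuantile μ τ (fun ω => lam + -γ * X ω + U ω))) :
    -- invariance to a location change of the covariate
    (∀ c : ℝ,
      s0 * γ *
          (∫ ω, fU (rvQuantile μ τ (fun ω' => lam + γ * (X ω' + c) + U ω') -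
              lam - γ * (X ω + c)) * ((X ω + c) - ∫ ω', (X ω' + c) ∂μ) ∂μ) /
          fYc c (rvQuantile μ τ (fun ω' => lam + γ * (X ω' + c) + U ω')) =
        s0 * γ *
          (∫ ω, fU (rvQuantile μ τ (fun ω' => lam + γ * X ω' + U ω') -
              lam - γ * X ω) * (X ω - ∫ ω', X ω' ∂μ) ∂μ) /
          fY (rvQuantile μ τ (fun ω' => lam + γ * X ω' + U ω'))) ∧
    -- invariance to the sign of γ
    (s0 * -γ *
        (∫ ω, fU (rvQuantile μ τ (fun ω' => lam + -γ * X ω' + U ω') -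
            lam - -γ * X ω) * (X ω - ∫ ω', X ω' ∂μ) ∂μ) /
        fYneg (rvQuantile μ τ (fun ω' => lam + -γ * X ω' + U ω')) =
      s0 * γ *
        (∫ ω, fU (rvQuantile μ τ (fun ω' => lam + γ * X ω' + U ω') -
            lam - γ * X ω) * (X ω - ∫ ω', X ω' ∂μ) ∂μ) /
        fY (rvQuantile μ τ (fun ω' => lam + γ * X ω' + U ω'))) :=
  stmt_7_general μ X U hX_meas hU_meas hX_int hindep fU hfU_cont hX_symm lam γ s0 τ hτ fY hfY_nonneg
    hfY_cont hfY_density fYc hfYc_nonneg hfYc_cont hfYc_density fYneg hfYneg_nonneg hfYneg_cont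
    hfYneg_density
end
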